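/- Fix ε₀ > 0 sufficiently small and set α := 1 + ε₀ and ε₁ := ε₀²/18. Define λ_q := ⌊λ₀^{α^q}⌋ for a real parameter λ₀, δ_q := λ_q^{−2/5+2ε₀}, μ_{q+1} := δ_q^{1/4} δ_{q+1}^{1/4} λ_q^{1/2} λ_{q+1}^{1/2}, and ℓ_{q+1} := λ_{q+1}^{−1+ε₁}. Then for all sufficiently large λ₀ the following inequalities hold for every q ∈ ℕ: (i) Σ_{j<q} δ_j λ_j ≤ δ_q λ_q; (ii) δ_q^{1/2} λ_q ℓ_{q+1} ≤ δ_{q+1}^{1/2}; (iii) δ_q^{1/2} λ_q / μ_{q+1} ≤ λ_{q+1}^{−ε₁}; (iv) 1/λ_{q+1} ≤ δ_{q+1}^{1/2} / μ_{q+1}; and (v) μ_{q+1} ≥ 2^{q+3}. -/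

import Mathlib

open scoped BigOperators

noncomputable section

/-- `λ_q := ⌊λ₀^{(1+ε₀)^q}⌋`. -/
def lamP (l₀ ε₀ : ℝ) (q : ℕ) : ℝ := ((⌊l₀ ^ ((1 + ε₀) ^ q)⌋ : ℤ) : ℝ)

/-- `δ_q := λ_q^{−2/5+2ε₀}`. -/
def delP (l₀ ε₀ : ℝ) (q : ℕ) : ℝ := lamP l₀ ε₀ q ^ (-(2 : ℝ)/5 + 2 * ε₀)

/-- `μ_q := δ_{q−1}^{1/4} δ_q^{1/4} λ_{q−1}^{1/2} λ_q^{1/2}` (for `q ≥ 1`). -/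
def muP (l₀ ε₀ : ℝ) (q : ℕ) : ℝ :=
  delP l₀ ε₀ (q - 1) ^ ((1 : ℝ)/4) * delP l₀ ε₀ q ^ ((1 : ℝ)/4)
    * lamP l₀ ε₀ (q - 1) ^ ((1 : ℝ)/2) * lamP l₀ ε₀ q ^ ((1 : ℝ)/2)

/-- `ℓ_q := λ_q^{−1+ε₁}` with `ε₁ = ε₀²/18` (for `q ≥ 1`). -/
def ellP (l₀ ε₀ : ℝ) (q : ℕ) : ℝ := lamP l₀ ε₀ q ^ (-(1 : ℝ) + ε₀ ^ 2 / 18)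

/-!
With `s := 2/5 + ε₀/2` one has `δ_q = λ_q^{4s-2}`, `δ_q^{1/2} λ_q = λ_q^{2s}` and
`μ_{q+1} = (λ_q λ_{q+1})^s`, so (ii)–(iv) reduce to `λ_q^p ≤ λ_{q+1}^r` for exponents with
`p + ε₀/3 ≤ (1 + ε₀) r`. Since `λ_q ≤ Λ := λ₀^{(1+ε₀)^q}` and `λ_{q+1} ≥ Λ^{1+ε₀}/2`, this gap
leaves a factor `Λ^{ε₀/3} ≥ λ₀^{ε₀/3} ≥ 4`, which even gives `2 λ_q^p ≤ λ_{q+1}^r`. This doubling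
makes the sum in (i) geometric, and iterated for `λ_q^s` it gives the exponential lower bound (v).
-/

lemma sum_range_add_le_of_two_mul_le {t : ℕ → ℝ} (h : ∀ j, 2 * t j ≤ t (j + 1)) (q : ℕ) :
    ∑ j ∈ Finset.range q, t j + t 0 ≤ t q := by
  induction q with
  | zero => simp
  | succ n ih => rw [Finset.sum_range_succ]; linarith [h n]

lemma two_pow_mul_le_of_two_mul_le {t : ℕ → ℝ} (h : ∀ j, 2 * t j ≤ t (j + 1)) (q : ℕ) :
    2 ^ q * t 0 ≤ t q := by
  induction q with
  | zero => simp
  | succ n ih => rw [pow_succ]; linarith [h n]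

lemma two_mul_rpow_le_rpow_of_le_of_half_rpow_le {x y X a p r : ℝ} (hx : 0 ≤ x) (hxX : x ≤ X)
    (hy : X ^ a / 2 ≤ y) (hX₀ : 0 < X) (hp : 0 ≤ p) (hr₀ : 0 ≤ r) (hr₁ : r ≤ 1)
    (hgap : 4 ≤ X ^ (a * r - p)) : 2 * x ^ p ≤ y ^ r := by
  have h2r : (2 : ℝ) ^ r ≤ 2 := by
    simpa using Real.rpow_le_rpow_of_exponent_le one_le_two hr₁
  calc 2 * x ^ p ≤ 2 * X ^ p := by gcongr
    _ ≤ X ^ (a * r - p) * X ^ p / 2 := by nlinarith [Real.rpow_nonneg hX₀.le p]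
    _ = X ^ (a * r) / 2 := by rw [← Real.rpow_add hX₀, sub_add_cancel]
    _ ≤ X ^ (a * r) / 2 ^ r := by gcongr
    _ = (X ^ a / 2) ^ r := by rw [Real.div_rpow (by positivity) zero_le_two, Real.rpow_mul hX₀.le]
    _ ≤ y ^ r := by gcongr

section Parameters

variable {l₀ ε₀ : ℝ}

lemma one_le_of_two_rpow_le (hε : 0 < ε₀) (hl : 2 ^ (6 / ε₀) ≤ l₀) : 1 ≤ l₀ :=
  (Real.one_le_rpow one_le_two (by positivity)).trans hl

lemma four_le_rpow_third (hε : 0 < ε₀) (hl : 2 ^ (6 / ε₀) ≤ l₀) : 4 ≤ l₀ ^ (ε₀ / 3) := by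
  calc (4 : ℝ) = (2 ^ (6 / ε₀)) ^ (ε₀ / 3) := by
        rw [← Real.rpow_mul zero_le_two, show 6 / ε₀ * (ε₀ / 3) = (2 : ℕ) by field_simp; norm_num,
          Real.rpow_natCast]
        norm_num
    _ ≤ l₀ ^ (ε₀ / 3) := by gcongr

lemma le_rpow_one_add_pow (hε : 0 ≤ ε₀) (hl : 1 ≤ l₀) (q : ℕ) : l₀ ≤ l₀ ^ ((1 + ε₀) ^ q) := by
  simpa using Real.rpow_le_rpow_of_exponent_le hl (one_le_pow₀ (by linarith : 1 ≤ 1 + ε₀))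

lemma one_le_lamP (hε : 0 ≤ ε₀) (hl : 1 ≤ l₀) (q : ℕ) : 1 ≤ lamP l₀ ε₀ q := by
  have : (1 : ℤ) ≤ ⌊l₀ ^ ((1 + ε₀) ^ q)⌋ :=
    Int.le_floor.mpr (by exact_mod_cast hl.trans (le_rpow_one_add_pow hε hl q))
  rw [lamP]; exact_mod_cast this

lemma rpow_div_two_le_lamP (hε : 0 ≤ ε₀) (hl : 1 ≤ l₀) (q : ℕ) :
    l₀ ^ ((1 + ε₀) ^ q) / 2 ≤ lamP l₀ ε₀ q :=
  (Int.div_two_lt_floor (hl.trans (le_rpow_one_add_pow hε hl q))).le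

lemma lamP_pos (hε : 0 ≤ ε₀) (hl : 1 ≤ l₀) (q : ℕ) : 0 < lamP l₀ ε₀ q :=
  one_pos.trans_le (one_le_lamP hε hl q)

lemma two_mul_lamP_rpow_le_lamP_succ_rpow (hε : 0 < ε₀) (hl : 2 ^ (6 / ε₀) ≤ l₀) (q : ℕ)
    {p r : ℝ} (hp : 0 ≤ p) (hr : r ≤ 1) (hpr : p + ε₀ / 3 ≤ (1 + ε₀) * r) :
    2 * lamP l₀ ε₀ q ^ p ≤ lamP l₀ ε₀ (q + 1) ^ r := by
  have hl₁ := one_le_of_two_rpow_le hε hl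
  set X := l₀ ^ ((1 + ε₀) ^ q)
  have hlX : l₀ ≤ X := le_rpow_one_add_pow hε.le hl₁ q
  have hsucc : l₀ ^ ((1 + ε₀) ^ (q + 1)) = X ^ (1 + ε₀) := by
    rw [pow_succ, Real.rpow_mul (by linarith)]
  have hr₀ : 0 ≤ r := by nlinarith
  refine two_mul_rpow_le_rpow_of_le_of_half_rpow_le (a := 1 + ε₀) (lamP_pos hε.le hl₁ q).le
    (Int.floor_le _) ?_ (by positivity) hp hr₀ hr ?_
  · rw [← hsucc]
    exact rpow_div_two_le_lamP hε.le hl₁ _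
  · calc (4 : ℝ) ≤ l₀ ^ (ε₀ / 3) := four_le_rpow_third hε hl
      _ ≤ X ^ (ε₀ / 3) := by gcongr
      _ ≤ X ^ ((1 + ε₀) * r - p) := Real.rpow_le_rpow_of_exponent_le (hl₁.trans hlX) (by linarith)

lemma lamP_rpow_le_lamP_succ_rpow (hε : 0 < ε₀) (hl : 2 ^ (6 / ε₀) ≤ l₀) (q : ℕ)
    {p r : ℝ} (hp : 0 ≤ p) (hr : r ≤ 1) (hpr : p + ε₀ / 3 ≤ (1 + ε₀) * r) :
    lamP l₀ ε₀ q ^ p ≤ lamP l₀ ε₀ (q + 1) ^ r := by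
  have := two_mul_lamP_rpow_le_lamP_succ_rpow hε hl q hp hr hpr
  have := Real.rpow_nonneg (lamP_pos hε.le (one_le_of_two_rpow_le hε hl) q).le p
  linarith

lemma delP_mul_lamP (hε : 0 ≤ ε₀) (hl : 1 ≤ l₀) (q : ℕ) :
    delP l₀ ε₀ q * lamP l₀ ε₀ q = lamP l₀ ε₀ q ^ (3 / 5 + 2 * ε₀) := by
  rw [delP, ← Real.rpow_add_one (lamP_pos hε hl q).ne']
  ring_nf

lemma delP_rpow_half (hε : 0 ≤ ε₀) (hl : 1 ≤ l₀) (q : ℕ) :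
    delP l₀ ε₀ q ^ (1 / 2 : ℝ) = lamP l₀ ε₀ q ^ (-1 / 5 + ε₀) := by
  rw [delP, ← Real.rpow_mul (lamP_pos hε hl q).le]
  ring_nf

lemma delP_rpow_half_mul_lamP (hε : 0 ≤ ε₀) (hl : 1 ≤ l₀) (q : ℕ) :
    delP l₀ ε₀ q ^ (1 / 2 : ℝ) * lamP l₀ ε₀ q = lamP l₀ ε₀ q ^ (4 / 5 + ε₀) := by
  rw [delP_rpow_half hε hl, ← Real.rpow_add_one (lamP_pos hε hl q).ne']
  ring_nf

lemma muP_succ (hε : 0 ≤ ε₀) (hl : 1 ≤ l₀) (q : ℕ) :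
    muP l₀ ε₀ (q + 1) = (lamP l₀ ε₀ q * lamP l₀ ε₀ (q + 1)) ^ (2 / 5 + ε₀ / 2) := by
  have h₀ := lamP_pos hε hl q
  have h₁ := lamP_pos hε hl (q + 1)
  rw [muP, Nat.add_sub_cancel, delP, delP, ← Real.rpow_mul h₀.le, ← Real.rpow_mul h₁.le,
    Real.mul_rpow h₀.le h₁.le, show 2 / 5 + ε₀ / 2 = (-2 / 5 + 2 * ε₀) * (1 / 4) + 1 / 2 by ring,
    Real.rpow_add h₀, Real.rpow_add h₁]
  ring

lemma sum_delP_mul_lamP_le (hε : 0 < ε₀) (hε' : ε₀ < 1 / 5) (hl : 2 ^ (6 / ε₀) ≤ l₀) (q : ℕ) :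
    ∑ j ∈ Finset.range q, delP l₀ ε₀ j * lamP l₀ ε₀ j ≤ delP l₀ ε₀ q * lamP l₀ ε₀ q := by
  have hl₁ := one_le_of_two_rpow_le hε hl
  simp only [delP_mul_lamP hε.le hl₁]
  have := sum_range_add_le_of_two_mul_le (t := fun j ↦ lamP l₀ ε₀ j ^ (3 / 5 + 2 * ε₀))
    (fun j ↦ two_mul_lamP_rpow_le_lamP_succ_rpow hε hl j (by positivity) (by linarith)
      (by nlinarith)) q
  linarith [Real.rpow_nonneg (lamP_pos hε.le hl₁ 0).le (3 / 5 + 2 * ε₀)]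

lemma delP_rpow_half_mul_lamP_mul_ellP_le (hε : 0 < ε₀) (hε' : ε₀ < 1 / 5)
    (hl : 2 ^ (6 / ε₀) ≤ l₀) (q : ℕ) :
    delP l₀ ε₀ q ^ (1 / 2 : ℝ) * lamP l₀ ε₀ q * ellP l₀ ε₀ (q + 1)
      ≤ delP l₀ ε₀ (q + 1) ^ (1 / 2 : ℝ) := by
  have hl₁ := one_le_of_two_rpow_le hε hl
  have h₁ := lamP_pos hε.le hl₁ (q + 1)
  rw [delP_rpow_half_mul_lamP hε.le hl₁, delP_rpow_half hε.le hl₁, ellP]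
  calc lamP l₀ ε₀ q ^ (4 / 5 + ε₀) * lamP l₀ ε₀ (q + 1) ^ (-1 + ε₀ ^ 2 / 18)
      ≤ lamP l₀ ε₀ (q + 1) ^ (4 / 5 + ε₀ - ε₀ ^ 2 / 18)
          * lamP l₀ ε₀ (q + 1) ^ (-1 + ε₀ ^ 2 / 18) := by
        gcongr
        exact lamP_rpow_le_lamP_succ_rpow hε hl q (by positivity) (by nlinarith) (by nlinarith)
    _ = lamP l₀ ε₀ (q + 1) ^ (-1 / 5 + ε₀) := by
        rw [← Real.rpow_add h₁]
        ring_nf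

lemma delP_rpow_half_mul_lamP_div_muP_le (hε : 0 < ε₀) (hε' : ε₀ < 1 / 5)
    (hl : 2 ^ (6 / ε₀) ≤ l₀) (q : ℕ) :
    delP l₀ ε₀ q ^ (1 / 2 : ℝ) * lamP l₀ ε₀ q / muP l₀ ε₀ (q + 1)
      ≤ lamP l₀ ε₀ (q + 1) ^ (-(ε₀ ^ 2 / 18)) := by
  have hl₁ := one_le_of_two_rpow_le hε hl
  have h₀ := lamP_pos hε.le hl₁ q
  have h₁ := lamP_pos hε.le hl₁ (q + 1)
  rw [delP_rpow_half_mul_lamP hε.le hl₁, muP_succ hε.le hl₁, div_le_iff₀ (by positivity)]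
  calc lamP l₀ ε₀ q ^ (4 / 5 + ε₀)
      = lamP l₀ ε₀ q ^ (2 / 5 + ε₀ / 2) * lamP l₀ ε₀ q ^ (2 / 5 + ε₀ / 2) := by
        rw [← Real.rpow_add h₀]
        ring_nf
    _ ≤ lamP l₀ ε₀ (q + 1) ^ (2 / 5 + ε₀ / 2 - ε₀ ^ 2 / 18)
          * lamP l₀ ε₀ q ^ (2 / 5 + ε₀ / 2) := by
        gcongr
        exact lamP_rpow_le_lamP_succ_rpow hε hl q (by positivity) (by nlinarith) (by nlinarith)
    _ = lamP l₀ ε₀ (q + 1) ^ (-(ε₀ ^ 2 / 18))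
          * (lamP l₀ ε₀ q * lamP l₀ ε₀ (q + 1)) ^ (2 / 5 + ε₀ / 2) := by
        rw [Real.mul_rpow h₀.le h₁.le, sub_eq_add_neg, Real.rpow_add h₁]
        ring

lemma one_div_lamP_le_delP_rpow_half_div_muP (hε : 0 < ε₀) (hε' : ε₀ < 1 / 5)
    (hl : 2 ^ (6 / ε₀) ≤ l₀) (q : ℕ) :
    1 / lamP l₀ ε₀ (q + 1) ≤ delP l₀ ε₀ (q + 1) ^ (1 / 2 : ℝ) / muP l₀ ε₀ (q + 1) := by
  have hl₁ := one_le_of_two_rpow_le hε hl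
  have h₀ := lamP_pos hε.le hl₁ q
  have h₁ := lamP_pos hε.le hl₁ (q + 1)
  rw [muP_succ hε.le hl₁, div_le_div_iff₀ h₁ (by positivity), one_mul,
    delP_rpow_half_mul_lamP hε.le hl₁, Real.mul_rpow h₀.le h₁.le]
  calc lamP l₀ ε₀ q ^ (2 / 5 + ε₀ / 2) * lamP l₀ ε₀ (q + 1) ^ (2 / 5 + ε₀ / 2)
      ≤ lamP l₀ ε₀ (q + 1) ^ (2 / 5 + ε₀ / 2) * lamP l₀ ε₀ (q + 1) ^ (2 / 5 + ε₀ / 2) := by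
        gcongr ?_ * _
        exact lamP_rpow_le_lamP_succ_rpow hε hl q (by positivity) (by linarith) (by nlinarith)
    _ = lamP l₀ ε₀ (q + 1) ^ (4 / 5 + ε₀) := by
        rw [← Real.rpow_add h₁]
        ring_nf

lemma four_le_lamP_zero_rpow (hε : 0 < ε₀) (hε' : ε₀ < 1 / 5) (hl : 2 ^ (6 / ε₀) ≤ l₀) :
    4 ≤ lamP l₀ ε₀ 0 ^ (2 / 5 + ε₀ / 2) := by
  have h64 : (64 : ℝ) ≤ l₀ := by
    calc (64 : ℝ) = 2 ^ ((6 : ℕ) : ℝ) := by rw [Real.rpow_natCast]; norm_num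
      _ ≤ 2 ^ (6 / ε₀) := by
        gcongr
        · norm_num
        · rw [le_div_iff₀ hε]; push_cast; linarith
      _ ≤ l₀ := hl
  have h32 : (32 : ℝ) ≤ lamP l₀ ε₀ 0 := by
    have := rpow_div_two_le_lamP hε.le (by linarith) 0
    rw [pow_zero, Real.rpow_one] at this
    linarith
  calc (4 : ℝ) = 32 ^ (2 / 5 : ℝ) := by
        rw [show (32 : ℝ) = 2 ^ (5 : ℝ) by norm_num, ← Real.rpow_mul zero_le_two]
        norm_num
    _ ≤ lamP l₀ ε₀ 0 ^ (2 / 5 : ℝ) := by gcongr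
    _ ≤ lamP l₀ ε₀ 0 ^ (2 / 5 + ε₀ / 2) :=
        Real.rpow_le_rpow_of_exponent_le (by linarith) (by linarith)

lemma two_pow_le_muP (hε : 0 < ε₀) (hε' : ε₀ < 1 / 5) (hl : 2 ^ (6 / ε₀) ≤ l₀) (q : ℕ) :
    (2 : ℝ) ^ (q + 3) ≤ muP l₀ ε₀ (q + 1) := by
  have hl₁ := one_le_of_two_rpow_le hε hl
  set t : ℕ → ℝ := fun j ↦ lamP l₀ ε₀ j ^ (2 / 5 + ε₀ / 2)
  have hdouble : 2 ^ (q + 1) * t 0 ≤ t (q + 1) :=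
    two_pow_mul_le_of_two_mul_le (fun j ↦ two_mul_lamP_rpow_le_lamP_succ_rpow hε hl j
      (by positivity) (by linarith) (by nlinarith)) (q + 1)
  have ht₀ : 4 ≤ t 0 := four_le_lamP_zero_rpow hε hε' hl
  have htq : 1 ≤ t q := Real.one_le_rpow (one_le_lamP hε.le hl₁ q) (by positivity)
  rw [muP_succ hε.le hl₁, Real.mul_rpow (lamP_pos hε.le hl₁ q).le (lamP_pos hε.le hl₁ _).le]
  have hsucc : (2 : ℝ) ^ (q + 3) ≤ t (q + 1) := by
    rw [show (2 : ℝ) ^ (q + 3) = 2 ^ (q + 1) * 4 by ring]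
    nlinarith [pow_pos (two_pos (α := ℝ)) (q + 1)]
  exact hsucc.trans (le_mul_of_one_le_left ((pow_pos two_pos _).le.trans hsucc) htq)

end Parameters

/-- **Ordering of the parameters** (Section 4 of the paper): for `ε₀` sufficiently small
and `λ₀` sufficiently large, the inequalities (i)–(v) hold for every `q ∈ ℕ`. -/
theorem parameter_ordering :
    ∃ ε' : ℝ, 0 < ε' ∧ ∀ ε₀ : ℝ, 0 < ε₀ → ε₀ < ε' →
    ∃ Λ₀ : ℝ, ∀ l₀ : ℝ, Λ₀ ≤ l₀ → ∀ q : ℕ,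
      -- (i)
      (∑ j ∈ Finset.range q, delP l₀ ε₀ j * lamP l₀ ε₀ j
          ≤ delP l₀ ε₀ q * lamP l₀ ε₀ q) ∧
      -- (ii)
      delP l₀ ε₀ q ^ ((1 : ℝ)/2) * lamP l₀ ε₀ q * ellP l₀ ε₀ (q + 1)
          ≤ delP l₀ ε₀ (q + 1) ^ ((1 : ℝ)/2) ∧
      -- (iii)
      delP l₀ ε₀ q ^ ((1 : ℝ)/2) * lamP l₀ ε₀ q / muP l₀ ε₀ (q + 1)
          ≤ lamP l₀ ε₀ (q + 1) ^ (-(ε₀ ^ 2 / 18)) ∧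
      -- (iv)
      1 / lamP l₀ ε₀ (q + 1) ≤ delP l₀ ε₀ (q + 1) ^ ((1 : ℝ)/2) / muP l₀ ε₀ (q + 1) ∧
      -- (v)
      (2 : ℝ) ^ (q + 3) ≤ muP l₀ ε₀ (q + 1) :=
  ⟨1 / 5, by norm_num, fun ε₀ hε hε' ↦ ⟨2 ^ (6 / ε₀), fun _ hl q ↦
    ⟨sum_delP_mul_lamP_le hε hε' hl q, delP_rpow_half_mul_lamP_mul_ellP_le hε hε' hl q,
      delP_rpow_half_mul_lamP_div_muP_le hε hε' hl q,
      one_div_lamP_le_delP_rpow_half_div_muP hε hε' hl q, two_pow_le_muP hε hε' hl q⟩⟩⟩
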